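/- arXiv:2104.12504 — 2 statements merged into one kernel-verified Lean document; each statement's English description precedes it below -/
import Mathlib

section
/- Let F = ℂ(x, θ) be a differential field where x' = 1, θ is transcendental over ℂ(x), and θ' = θ (so θ plays the role of e^x), with field of constants ℂ. Then there is no element z ∈ F with z' = (1-θ)'/(1-θ) = -θ/(1-θ). That is, the logarithmic derivative of 1 - e^x has no antiderivative in ℂ(x, e^x). -/
/-!
Let `K = ℂ(x)`, so that `F = K(θ)` with `θ` transcendental over `K`, and suppose
`(θ - 1) z' = θ`. Write `z = P(θ)/Q(θ)` in lowest terms and `Q = (X - 1)^n B` with `B(1) ≠ 0`.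
Because `K[θ]` is stable under the derivation, differentiating `z Q(θ) = P(θ)` gives an identity
in `K[X]`, and evaluating it at the pole `X = 1` of `θ/(θ - 1)` forces both `n > 0` and
`P(1) = 0`, which contradicts coprimality. In other words, no derivative in `K(θ)` has a simple
pole at `θ = 1`.
-/

open Polynomial IntermediateField

theorem exists_isCoprime_eq_aeval_div {K L : Type*} [Field K] [Field L] [Algebra K L] {θ : L}
    (hθ : Transcendental K θ) {z : L} (hz : z ∈ K⟮θ⟯) :
    ∃ P Q : K[X], IsCoprime P Q ∧ Q ≠ 0 ∧ z = aeval θ P / aeval θ Q := by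
  set f := (RatFunc.algEquivOfTranscendental θ hθ).symm ⟨z, hz⟩
  refine ⟨f.num, f.denom, f.isCoprime_num_denom, f.denom_ne_zero, ?_⟩
  rw [← RatFunc.algEquivOfTranscendental_apply θ hθ, AlgEquiv.apply_symm_apply]

theorem Polynomial.pos_and_eval_one_eq_zero {K : Type*} [Field K] [CharZero K]
    {P P' B B' : K[X]} {n : ℕ} (hB : B.eval 1 ≠ 0)
    (h : (X - C 1) * P' * B =
      X * (X - C 1) ^ n * B ^ 2 + (n : K[X]) * X * P * B + (X - C 1) * P * B') :
    0 < n ∧ P.eval 1 = 0 := by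
  have h1 := congrArg (eval 1) h
  simp only [eval_add, eval_mul, eval_pow, eval_X, eval_C, eval_sub, eval_natCast, sub_self,
    zero_mul, one_mul, mul_one, add_zero] at h1
  rcases n with _ | n
  · exact absurd (by simpa using h1.symm) hB
  · rw [zero_pow n.succ_ne_zero, zero_mul, zero_add, eq_comm, mul_eq_zero, mul_eq_zero,
      Nat.cast_eq_zero] at h1
    exact ⟨n.succ_pos, by simpa [hB] using h1⟩

namespace Derivation

variable {R F : Type*} [CommRing R] [Field F] [Algebra R F] (δ : Derivation R F F)

theorem map_mem_subfieldClosure {s : Set F} (hs : ∀ a ∈ s, δ a ∈ Subfield.closure s)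
    {a : F} (ha : a ∈ Subfield.closure s) : δ a ∈ Subfield.closure s := by
  induction ha using Subfield.closure_induction with
  | mem a ha => exact hs a ha
  | one => simp
  | add a b _ _ iha ihb => simpa using add_mem iha ihb
  | neg a _ iha => simpa using neg_mem iha
  | inv a ha iha =>
    rw [leibniz_inv, smul_eq_mul]
    exact mul_mem (neg_mem (pow_mem (inv_mem ha) 2)) iha
  | mul a b ha hb iha ihb =>
    rw [leibniz, smul_eq_mul, smul_eq_mul]
    exact add_mem (mul_mem ha ihb) (mul_mem hb iha)

theorem map_mem_adjoin {K : Subfield F} (hK : ∀ a ∈ K, δ a ∈ K) {s : Set F}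
    (hs : ∀ a ∈ s, δ a ∈ Algebra.adjoin K s) {a : F} (ha : a ∈ Algebra.adjoin K s) :
    δ a ∈ Algebra.adjoin K s := by
  induction ha using Algebra.adjoin_induction with
  | mem a ha => exact hs a ha
  | algebraMap k => exact Subalgebra.algebraMap_mem _ (⟨δ k, hK k k.2⟩ : K)
  | add a b _ _ iha ihb => simpa using add_mem iha ihb
  | mul a b ha hb iha ihb =>
    rw [leibniz, smul_eq_mul, smul_eq_mul]
    exact add_mem (mul_mem ha ihb) (mul_mem hb iha)

theorem mul_map_pow (u : F) (n : ℕ) : u * δ (u ^ n) = n * u ^ n * δ u := by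
  rcases n with _ | n
  · simp
  · rw [leibniz_pow, nsmul_eq_mul, smul_eq_mul]
    push_cast
    ring

theorem mul_map_mul_eq_of_mul_map_eq {z u B p : F} (n : ℕ) (hz : u * δ z = δ u)
    (hp : z * (u ^ n * B) = p) :
    u * δ p * B = δ u * u ^ n * B ^ 2 + n * δ u * p * B + u * p * δ B := by
  have hun := δ.mul_map_pow u n
  subst hp
  simp only [leibniz, smul_eq_mul]
  linear_combination (u ^ n * B ^ 2) * hz + (z * B ^ 2) * hun

theorem exists_map_aeval_eq_aeval {K : Subfield F} (hK : ∀ a ∈ K, δ a ∈ K) {θ : F}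
    (hθ : δ θ ∈ Algebra.adjoin K {θ}) (p : K[X]) : ∃ q : K[X], δ (aeval θ p) = aeval θ q := by
  have := δ.map_mem_adjoin hK (by simpa using hθ) (aeval_mem_adjoin_singleton K θ (p := p))
  rw [Algebra.adjoin_singleton_eq_range_aeval] at this
  obtain ⟨q, hq⟩ := this
  exact ⟨q, hq.symm⟩

theorem map_ne_div_sub_one [CharZero F] {K : Subfield F} (hK : ∀ a ∈ K, δ a ∈ K) {θ : F}
    (hθtr : Transcendental K θ) (hθ : δ θ = θ) {z : F} (hz : z ∈ K⟮θ⟯) :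
    δ z ≠ θ / (θ - 1) := by
  intro hδz
  obtain ⟨P, Q, hPQ, hQ, rfl⟩ := exists_isCoprime_eq_aeval_div hθtr hz
  obtain ⟨B, hQB, hB⟩ := Q.exists_eq_pow_rootMultiplicity_mul_and_not_dvd hQ 1
  have hθK : δ θ ∈ Algebra.adjoin K {θ} := by
    rw [hθ]; exact Algebra.self_mem_adjoin_singleton K θ
  obtain ⟨P', hP'⟩ := δ.exists_map_aeval_eq_aeval hK hθK P
  obtain ⟨B', hB'⟩ := δ.exists_map_aeval_eq_aeval hK hθK B
  have hinj : Function.Injective (aeval θ : K[X] → F) := transcendental_iff_injective.mp hθtr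
  have hu : aeval θ (X - C 1 : K[X]) = θ - 1 := by simp
  have hu0 : θ - 1 ≠ 0 := fun h => X_sub_C_ne_zero (1 : K) (hinj (by rw [hu, h, map_zero]))
  have hQθ : aeval θ Q = (θ - 1) ^ Q.rootMultiplicity 1 * aeval θ B := by
    rw [← hu, ← map_pow, ← map_mul, ← hQB]
  have hlog : (θ - 1) * δ (aeval θ P / aeval θ Q) = δ (θ - 1) := by
    rw [hδz, map_sub, hθ, map_one_eq_zero, sub_zero]
    field_simp
  have key := δ.mul_map_mul_eq_of_mul_map_eq (Q.rootMultiplicity 1) hlog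
    (by rw [← hQθ, div_mul_cancel₀ _ (fun h => hQ (hinj (by rw [h, map_zero])))])
  rw [hP', hB', map_sub, hθ, map_one_eq_zero, sub_zero] at key
  have hpoly : (X - C 1) * P' * B =
      X * (X - C 1) ^ Q.rootMultiplicity 1 * B ^ 2 + (Q.rootMultiplicity 1 : K[X]) * X * P * B +
        (X - C 1) * P * B' :=
    hinj (by simpa [hu] using key)
  obtain ⟨hpos, hP1⟩ := pos_and_eval_one_eq_zero (fun h => hB (dvd_iff_isRoot.mpr h)) hpoly
  have hdvdQ : X - C 1 ∣ Q := hQB ▸ dvd_mul_of_dvd_left (dvd_pow_self _ hpos.ne') B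
  exact not_isUnit_X_sub_C (1 : K) (hPQ.isUnit_of_dvd' (dvd_iff_isRoot.mpr hP1) hdvdQ)

end Derivation

theorem stmt5_general {F : Type*} [Field F] [CharZero F] (δ : Derivation ℚ F F)
    (c : ℂ →+* F) (x θ : F)
    (hc : ∀ a : ℂ, δ (c a) = 0) (hx : δ x = 1) (hθ : δ θ = θ)
    (hθtr : Transcendental (↥(Subfield.closure (Set.range ⇑c ∪ {x}))) θ)
    (hgen : Subfield.closure (Set.range ⇑c ∪ {x, θ}) = ⊤) :
    ¬ ∃ z : F, δ z = δ (1 - θ) / (1 - θ) := by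
  set K := Subfield.closure (Set.range c ∪ {x})
  have hK : ∀ a ∈ K, δ a ∈ K := fun a ha => δ.map_mem_subfieldClosure (by
    rintro _ (⟨b, rfl⟩ | rfl)
    · simp [hc]
    · simp [hx]) ha
  have hKθ : ∀ z : F, z ∈ K⟮θ⟯ := by
    have hle : Subfield.closure (Set.range c ∪ {x, θ}) ≤ (K⟮θ⟯).toSubfield := by
      rw [Subfield.closure_le, Set.insert_eq, ← Set.union_assoc, Set.union_subset_iff]
      refine ⟨fun a ha => (K⟮θ⟯).algebraMap_mem (⟨a, Subfield.subset_closure ha⟩ : K), ?_⟩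
      exact Set.singleton_subset_iff.mpr (mem_adjoin_simple_self K θ)
    exact fun z => hle (hgen ▸ Subfield.mem_top z)
  rintro ⟨z, hz⟩
  refine δ.map_ne_div_sub_one hK hθtr hθ (hKθ z) ?_
  rw [hz, map_sub, δ.map_one_eq_zero, hθ, zero_sub, ← neg_div_neg_eq, neg_neg, neg_sub]

/-- In the differential field `F = ℂ(x, θ)` with `x' = 1`, `θ' = θ` (so `θ`
plays the role of `e^x`) and field of constants `ℂ`, there is no `z ∈ F` with
`z' = (1-θ)'/(1-θ)`: the logarithmic derivative of `1 - e^x` has no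
antiderivative in `ℂ(x, e^x)`. -/
theorem stmt5 {F : Type*} [Field F] [CharZero F] (δ : Derivation ℚ F F)
    (c : ℂ →+* F) (x θ : F)
    (hc : ∀ a : ℂ, δ (c a) = 0) (hx : δ x = 1) (hθ : δ θ = θ)
    (hxtr : Transcendental (↥(Subfield.closure (Set.range ⇑c))) x)
    (hθtr : Transcendental (↥(Subfield.closure (Set.range ⇑c ∪ {x}))) θ)
    (hgen : Subfield.closure (Set.range ⇑c ∪ {x, θ}) = ⊤)
    (hconst : ∀ a : F, δ a = 0 → ∃ z : ℂ, a = c z) :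
    ¬ ∃ z : F, δ z = δ (1 - θ) / (1 - θ) :=
  stmt5_general δ c x θ hc hx hθ hθtr hgen
end

section
/- Let F be a differential field of characteristic zero, θ transcendental over F, and α, β ∈ F distinct. Let g = (θ-α)/(θ-β) ∈ F(θ). Suppose E is a differential extension of F(θ) containing elements L_α, L_β with L_α' = (θ-α)'/(θ-α), L_β' = (θ-β)'/(θ-β), and dilogarithmic integrals A, B with A' = -(g'/g)·M and B' = -((g⁻¹)'/g⁻¹)·N, where M' = (1-g)'/(1-g) and N' = (1-g⁻¹)'/(1-g⁻¹). Then there exist constants c and d (in the constants of E) such that A + B = L_α·L_β - (1/2)·(L_α² + L_β²) + d·(L_α - L_β) + c. -/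
/-!
Put `u = θ - α`, `v = θ - β`, `g = u / v`. Since `1 - g = (v - u) / v` and
`1 - g⁻¹ = -(v - u) / u`, with `v - u = α - β`, both `M' = w - L_β'` and `N' = w - L_α'`,
where `w` is the logarithmic derivative of `α - β`. Hence `d := N - M + L_α - L_β` is a
constant, and then `A + B - L_α L_β + ½ (L_α² + L_β²) - d (L_α - L_β)` has derivative zero.
-/

open Differential

namespace Differential

variable {K : Type*} [Field K] [Differential K]

lemma logDeriv_neg (a : K) : logDeriv (-a) = logDeriv a := by
  simp only [logDeriv, map_neg, neg_div_neg_eq]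

lemma logDeriv_one_sub_div {u v : K} (hv : v ≠ 0) (huv : u ≠ v) :
    logDeriv (1 - u / v) = logDeriv (v - u) - logDeriv v := by
  rw [one_sub_div hv, logDeriv_div _ _ (sub_ne_zero.mpr huv.symm) hv]

lemma deriv_one_div_two : (1 / 2 : K)′ = 0 := by
  rw [one_div, Derivation.leibniz_inv, ← Nat.cast_ofNat, Derivation.map_natCast, smul_zero]

theorem exists_const_inversion_of_deriv_eq [CharZero K] {a b w La Lb M N A B : K}
    (hLa : La′ = a) (hLb : Lb′ = b) (hM : M′ = w - b) (hN : N′ = w - a)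
    (hA : A′ = -(a - b) * M) (hB : B′ = -(b - a) * N) :
    ∃ c d : K, c′ = 0 ∧ d′ = 0 ∧
      A + B = La * Lb - (1 / 2 : K) * (La ^ 2 + Lb ^ 2) + d * (La - Lb) + c := by
  set d := N - M + La - Lb
  have hd : d′ = 0 := by
    simp only [d, map_sub, map_add, hM, hN, hLa, hLb]
    ring
  refine ⟨A + B - (La * Lb - (1 / 2 : K) * (La ^ 2 + Lb ^ 2) + d * (La - Lb)), d, ?_, hd,
    by ring⟩
  simp only [map_sub, map_add, deriv_one_div_two, sq, Derivation.leibniz, smul_eq_mul, hd,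
    hA, hB, hLa, hLb]
  simp only [d]
  field_simp
  ring

theorem exists_const_inversion_of_logDeriv [CharZero K] {u v Lu Lv M N A B : K}
    (hu : u ≠ 0) (hv : v ≠ 0) (huv : u ≠ v)
    (hLu : Lu′ = logDeriv u) (hLv : Lv′ = logDeriv v)
    (hM : M′ = logDeriv (1 - u / v)) (hN : N′ = logDeriv (1 - (u / v)⁻¹))
    (hA : A′ = -logDeriv (u / v) * M) (hB : B′ = -logDeriv (u / v)⁻¹ * N) :
    ∃ c d : K, c′ = 0 ∧ d′ = 0 ∧
      A + B = Lu * Lv - (1 / 2 : K) * (Lu ^ 2 + Lv ^ 2) + d * (Lu - Lv) + c := by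
  rw [logDeriv_one_sub_div hv huv] at hM
  rw [inv_div, logDeriv_one_sub_div hu huv.symm, ← neg_sub v u, logDeriv_neg] at hN
  rw [logDeriv_div _ _ hu hv] at hA
  rw [inv_div, logDeriv_div _ _ hv hu] at hB
  exact exists_const_inversion_of_deriv_eq hLu hLv hM hN hA hB

end Differential

lemma Transcendental.sub_ne_zero_of_mem {E : Type*} [Field E] {F : Subfield E} {θ α : E}
    (hθ : Transcendental F θ) (hα : α ∈ F) : θ - α ≠ 0 :=
  sub_ne_zero.mpr fun h => hθ (h ▸ isAlgebraic_algebraMap (⟨α, hα⟩ : F))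

theorem stmt9_general {E : Type*} [Field E] [CharZero E] (δ : Derivation ℚ E E)
    (F : Subfield E)
    (θ : E) (hθ : Transcendental (↥F) θ)
    (α β : E) (hα : α ∈ F) (hβ : β ∈ F) (hαβ : α ≠ β)
    (Lα Lβ M N A B : E)
    (hLα : δ Lα = δ (θ - α) / (θ - α)) (hLβ : δ Lβ = δ (θ - β) / (θ - β))
    (hM : δ M = δ (1 - (θ - α) / (θ - β)) / (1 - (θ - α) / (θ - β)))
    (hN : δ N = δ (1 - ((θ - α) / (θ - β))⁻¹) / (1 - ((θ - α) / (θ - β))⁻¹))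
    (hA : δ A = -(δ ((θ - α) / (θ - β)) / ((θ - α) / (θ - β))) * M)
    (hB : δ B = -(δ (((θ - α) / (θ - β))⁻¹) / ((θ - α) / (θ - β))⁻¹) * N) :
    ∃ c d : E, δ c = 0 ∧ δ d = 0 ∧
      A + B = Lα * Lβ - (1 / 2 : E) * (Lα ^ 2 + Lβ ^ 2) + d * (Lα - Lβ) + c := by
  let : Differential E := ⟨δ.restrictScalars ℤ⟩
  have huv : θ - α ≠ θ - β := fun h => hαβ (sub_right_injective h)
  exact exists_const_inversion_of_logDeriv (hθ.sub_ne_zero_of_mem hα) (hθ.sub_ne_zero_of_mem hβ)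
    huv hLα hLβ hM hN hA hB

/-- Inversion identity: for `g = (θ-α)/(θ-β)` with `θ` transcendental over `F`
and distinct `α, β ∈ F`, if `A`, `B` are dilogarithmic integrals of `g` and
`g⁻¹` and `L_α`, `L_β` logarithms of `θ-α`, `θ-β`, then for some constants
`c, d`: `A + B = L_α·L_β - ½(L_α² + L_β²) + d·(L_α - L_β) + c`. -/
theorem stmt9 {E : Type*} [Field E] [CharZero E] (δ : Derivation ℚ E E)
    (F : Subfield E) (hFδ : ∀ y ∈ F, δ y ∈ F)
    (θ : E) (hθ : Transcendental (↥F) θ)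
    (α β : E) (hα : α ∈ F) (hβ : β ∈ F) (hαβ : α ≠ β)
    (Lα Lβ M N A B : E)
    (hLα : δ Lα = δ (θ - α) / (θ - α)) (hLβ : δ Lβ = δ (θ - β) / (θ - β))
    (hM : δ M = δ (1 - (θ - α) / (θ - β)) / (1 - (θ - α) / (θ - β)))
    (hN : δ N = δ (1 - ((θ - α) / (θ - β))⁻¹) / (1 - ((θ - α) / (θ - β))⁻¹))
    (hA : δ A = -(δ ((θ - α) / (θ - β)) / ((θ - α) / (θ - β))) * M)
    (hB : δ B = -(δ (((θ - α) / (θ - β))⁻¹) / ((θ - α) / (θ - β))⁻¹) * N) :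
    ∃ c d : E, δ c = 0 ∧ δ d = 0 ∧
      A + B = Lα * Lβ - (1 / 2 : E) * (Lα ^ 2 + Lβ ^ 2) + d * (Lα - Lβ) + c :=
  stmt9_general δ F θ hθ α β hα hβ hαβ Lα Lβ M N A B hLα hLβ hM hN hA hB
end
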